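/- arXiv:1509.03380 — 2 statements merged into one kernel-verified Lean document; each statement's English description precedes it below -/
import Mathlib

section
/- If H is a tree, then every Cartier divisor on the triangulated product Δ of G and H is linearly equivalent (i.e., differs by a principal divisor on Δ) to a Cartier divisor that vanishes on every diagonal edge of Δ. -/
open scoped Classical
open Finset

section TriangulatedProduct

variable {VG VH : Type*}

/-- The column of the Laplacian matrix of `G` indexed by the vertex `w`:
its entry at `v` is `-deg v` if `v = w`, `1` if `v` is adjacent to `w`, and `0` otherwise. -/
noncomputable def lapCol (G : SimpleGraph VG) [Fintype VG] (w v : VG) : ℤ :=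
  if v = w then -(((Finset.univ.filter (fun u => G.Adj v u)).card : ℤ))
  else if G.Adj v w then 1 else 0

/-- A divisor on a finite graph is principal if it lies in the ℤ-span of the
columns of the Laplacian matrix of the graph. -/
def GraphPrincipal (G : SimpleGraph VG) [Fintype VG] (D : VG → ℤ) : Prop :=
  ∃ f : VG → ℤ, ∀ v, D v = ∑ w, f w * lapCol G w v

/-- A triangulated product of the graphs `G` and `H`: for each square
(an edge `aa'` of `G` together with an edge `bb'` of `H`) exactly one of the two
possible diagonals `{(a,b),(a',b')}`, `{(a,b'),(a',b)}` is chosen.  The structure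
records the resulting symmetric "diagonal edge" relation. -/
structure TriProd (G : SimpleGraph VG) (H : SimpleGraph VH) where
  diag : VG × VH → VG × VH → Prop
  diag_symm : ∀ u v, diag u v → diag v u
  diag_adj : ∀ a a' b b', diag (a, b) (a', b') → G.Adj a a' ∧ H.Adj b b'
  diag_choice : ∀ a a' b b', G.Adj a a' → H.Adj b b' →
    (diag (a, b) (a', b') ∧ ¬ diag (a, b') (a', b)) ∨
    (¬ diag (a, b) (a', b') ∧ diag (a, b') (a', b))

namespace TriProd

variable {G : SimpleGraph VG} {H : SimpleGraph VH}

/-- `u` and `v` form an edge of the triangulated product: a horizontal edge,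
a vertical edge, or a diagonal edge. -/
def Adj (T : TriProd G H) (u v : VG × VH) : Prop :=
  (u.2 = v.2 ∧ G.Adj u.1 v.1) ∨ (u.1 = v.1 ∧ H.Adj u.2 v.2) ∨ T.diag u v

/-- `{u, v, w}` is a triangle (2-face) of the triangulated product. -/
def IsFace (T : TriProd G H) (u v w : VG × VH) : Prop :=
  ∃ a a' b b', T.diag (a, b) (a', b') ∧
    ({u, v, w} : Finset (VG × VH)) = {(a, b), (a', b'), (a', b)}

/-- `{u, v, w}` is a triangle of the triangulated product whose diagonal edge
does not contain the vertex `x`. -/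
def IsFaceAvoiding (T : TriProd G H) (u v w x : VG × VH) : Prop :=
  ∃ a a' b b', T.diag (a, b) (a', b') ∧
    ({u, v, w} : Finset (VG × VH)) = {(a, b), (a', b'), (a', b)} ∧
    x ≠ (a, b) ∧ x ≠ (a', b')

variable [Fintype VG] [Fintype VH]

/-- The structure constant `α(e, x)` for the edge `e = {u, v}` of the
triangulated product and the vertex `x`. -/
noncomputable def alpha (T : TriProd G H) (u v x : VG × VH) : ℤ :=
  if x = u ∨ x = v then
    (if T.diag u v then 1
     else ((Finset.univ.filter (fun w => T.IsFaceAvoiding u v w x)).card : ℤ))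
  else 0

/-- The divisor of the function `φ`, evaluated at the edge `{u, v}` of the
triangulated product: the sum of `φ` over the third vertices of the triangles
containing `{u, v}`, minus `α({u,v},u) φ(u) + α({u,v},v) φ(v)`. -/
noncomputable def Div (T : TriProd G H) (φ : VG × VH → ℤ) (u v : VG × VH) : ℤ :=
  (∑ w ∈ Finset.univ.filter (fun w => T.IsFace u v w), φ w)
    - (T.alpha u v u * φ u + T.alpha u v v * φ v)

/-- A divisor on the triangulated product (a function on edges, encoded as a
function on ordered pairs of vertices) is principal if it agrees with `Div φ`
on every edge, for some `φ`. -/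
def Principal (T : TriProd G H) (D : VG × VH → VG × VH → ℤ) : Prop :=
  ∃ φ : VG × VH → ℤ, ∀ u v, T.Adj u v → D u v = T.Div φ u v

/-- A divisor on the triangulated product is Cartier if near every vertex `x`
it agrees with a principal divisor on all edges containing `x`. -/
def Cartier (T : TriProd G H) (D : VG × VH → VG × VH → ℤ) : Prop :=
  ∀ x : VG × VH, ∃ φ : VG × VH → ℤ,
    ∀ u v, T.Adj u v → (x = u ∨ x = v) → D u v = T.Div φ u v

/-- A divisor is ℚ-Cartier if some nonzero integer multiple of it is Cartier. -/
def QCartier (T : TriProd G H) (D : VG × VH → VG × VH → ℤ) : Prop :=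
  ∃ m : ℤ, m ≠ 0 ∧ T.Cartier (fun u v => m * D u v)

/-- The balancing conditions for a divisor `D` on the triangulated product. -/
def Balanced (T : TriProd G H) (D : VG × VH → VG × VH → ℤ) : Prop :=
  ∀ a : VG, ∀ b : VH,
    (∀ x x' : VG, G.Adj a x → G.Adj a x' →
      (∑ c ∈ Finset.univ.filter (fun c : VH => T.Adj (a, b) (x, c)), D (a, b) (x, c)) =
      (∑ c ∈ Finset.univ.filter (fun c : VH => T.Adj (a, b) (x', c)), D (a, b) (x', c))) ∧
    (∀ y y' : VH, H.Adj b y → H.Adj b y' →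
      (∑ c ∈ Finset.univ.filter (fun c : VG => T.Adj (a, b) (c, y)), D (a, b) (c, y)) =
      (∑ c ∈ Finset.univ.filter (fun c : VG => T.Adj (a, b) (c, y')), D (a, b) (c, y')))

end TriProd

/-- The map `β` sending a pair of divisors on `G` and `H` to a divisor on the
triangulated product: `C(a)` on vertical edges `{(a,b),(a,b')}`, `D(b)` on
horizontal edges `{(a,b),(a',b)}`, and `0` on diagonal edges. -/
noncomputable def beta (C : VG → ℤ) (D : VH → ℤ) (u v : VG × VH) : ℤ :=
  if u.1 = v.1 then C u.1 else if u.2 = v.2 then D u.2 else 0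

end TriangulatedProduct

/-!
On the diagonal of the square `{a, x} × {b, c}`, `Div ψ` is the mixed difference
`ψ (x, b) + ψ (a, c) - ψ (a, b) - ψ (x, c)`; it suffices to find `ψ` with `Div ψ = D` on every
diagonal and to take `D' = D - Div ψ`.

For `x` adjacent to `a`, a principal divisor summed over the edges joining `(a, β)` to the column
of `x` gives a vertical Laplacian at `(a, β)`, independent of `x`; so a Cartier divisor `D` has such
column sums `L (a, β)`. Deleting the edge `bc` cuts the tree `H` in two, and summing
`L (a, β) - L (x, β)` over the side of `b` leaves, by symmetry of `D`, only the flux of `D` across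
the cut: its value on the diagonal of the square. Hence `τ_bc a = ∑_{β on b's side} L (a, β)` has
the required differences in `a`, and as `H` is a tree these edge functions integrate to a potential
`g : VH → VG → ℤ`; take `ψ (a, β) = g β a`.
-/

namespace SimpleGraph

variable {V : Type*} {H : SimpleGraph V}

theorem IsTree.exists_potential {M : Type*} [AddCommGroup M] (hH : H.IsTree) (m : V → V → M) :
    ∃ g : V → M, ∀ v w, H.Adj v w → g w - g v = m v w ∨ g v - g w = m w v := by
  obtain ⟨r⟩ := hH.connected.nonempty
  let p : ∀ v, H.Path r v := fun v => (hH.connected r v).some.toPath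
  refine ⟨fun v => ((p v).1.darts.map fun d => m d.fst d.snd).sum, fun v w hvw => ?_⟩
  by_cases hv : v ∈ (p w).1.support
  · left
    simp [hH.isAcyclic.path_concat (p v).2 (p w).2 hvw hv]
  · right
    have hw := hH.isAcyclic.mem_support_of_ne_mem_support_of_adj_of_isPath (p v).2 (p w).2 hvw hv
    simp [hH.isAcyclic.path_concat (p w).2 (p v).2 hvw.symm hw]

theorem reachable_deleteEdges_iff_of_adj {b c β γ : V} (h : H.Adj β γ)
    (hne : s(β, γ) ≠ s(b, c)) :
    (H.deleteEdges {s(b, c)}).Reachable b β ↔ (H.deleteEdges {s(b, c)}).Reachable b γ := by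
  have : (H.deleteEdges {s(b, c)}).Adj β γ := by simp [h, hne]
  exact ⟨fun hβ => hβ.trans this.reachable, fun hγ => hγ.trans this.symm.reachable⟩

end SimpleGraph

theorem net_flux_eq_of_unique_crossing {α M : Type*} [Fintype α] [AddCommGroup M]
    (S : α → Prop) [DecidablePred S] (w : α → α → M) {b c : α} (hb : S b) (hc : ¬ S c)
    (hw : ∀ β γ, w β γ ≠ 0 → (β, γ) ≠ (b, c) → (S β ↔ S γ)) :
    ∑ β with S β, ∑ γ, w β γ - ∑ γ with S γ, ∑ β, w β γ = w b c := by
  simp only [sum_filter, ite_sum_zero]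
  rw [sum_comm (s := univ) (t := univ) (f := fun γ β => if S γ then w β γ else 0),
    ← sum_sub_distrib]
  simp only [← sum_sub_distrib]
  rw [← Fintype.sum_prod_type'
    (f := fun β γ => (if S β then w β γ else 0) - if S γ then w β γ else 0),
    Fintype.sum_eq_single (b, c)]
  · simp [hb, hc]
  · rintro ⟨β, γ⟩ hne
    by_cases h : w β γ = 0
    · simp [h]
    · simp [hw β γ h hne]

theorem Finset.mem_of_triple_eq {α : Type*} [DecidableEq α] {p q r u v w : α}
    (h : ({u, v, w} : Finset α) = {p, q, r}) :
    (u = p ∨ u = q ∨ u = r) ∧ (v = p ∨ v = q ∨ v = r) ∧ (w = p ∨ w = q ∨ w = r) ∧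
    (p = u ∨ p = v ∨ p = w) ∧ (q = u ∨ q = v ∨ q = w) ∧ (r = u ∨ r = v ∨ r = w) := by
  have key (z : α) : z ∈ ({u, v, w} : Finset α) ↔ z ∈ ({p, q, r} : Finset α) := by rw [h]
  simp only [Finset.mem_insert, Finset.mem_singleton] at key
  exact ⟨(key u).1 (by simp), (key v).1 (by simp), (key w).1 (by simp),
    (key p).2 (by simp), (key q).2 (by simp), (key r).2 (by simp)⟩

namespace TriProd

variable {VG VH : Type*} {G : SimpleGraph VG} {H : SimpleGraph VH} (T : TriProd G H)

theorem diag_comm (u v : VG × VH) : T.diag u v ↔ T.diag v u :=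
  ⟨T.diag_symm u v, T.diag_symm v u⟩

theorem isFace_comm (u v w : VG × VH) : T.IsFace u v w ↔ T.IsFace v u w := by
  simp only [IsFace, Finset.insert_comm]

theorem isFaceAvoiding_comm (u v w z : VG × VH) :
    T.IsFaceAvoiding u v w z ↔ T.IsFaceAvoiding v u w z := by
  simp only [IsFaceAvoiding, Finset.insert_comm]

theorem adj_comm {u v : VG × VH} : T.Adj u v ↔ T.Adj v u := by
  unfold Adj
  grind [T.diag_symm, SimpleGraph.adj_comm]

theorem adj_of_diag {u v : VG × VH} (h : T.diag u v) : G.Adj u.1 v.1 ∧ H.Adj u.2 v.2 :=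
  T.diag_adj u.1 v.1 u.2 v.2 h

theorem adj_iff_diag_or_diag {a x : VG} {β γ : VH} (hax : G.Adj a x) :
    H.Adj β γ ↔ T.diag (a, β) (x, γ) ∨ T.diag (a, γ) (x, β) := by
  refine ⟨fun h => ?_, ?_⟩
  · rcases T.diag_choice a x β γ hax h with h | h
    exacts [Or.inl h.1, Or.inr h.2]
  · rintro (h | h)
    exacts [(T.adj_of_diag h).2, (T.adj_of_diag h).2.symm]

theorem not_diag_and_diag {a x : VG} {β γ : VH} (hax : G.Adj a x) :
    ¬ (T.diag (a, β) (x, γ) ∧ T.diag (a, γ) (x, β)) := fun ⟨h, h'⟩ => by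
  rcases T.diag_choice a x β γ hax (T.adj_of_diag h).2 with h'' | h''
  exacts [h''.2 h', h''.1 h]

theorem isFace_iff_of_diag {a x : VG} {b c : VH} (hd : T.diag (a, b) (x, c)) (w : VG × VH) :
    T.IsFace (a, b) (x, c) w ↔ w = (x, b) ∨ w = (a, c) := by
  have := T.adj_of_diag hd
  constructor
  · rintro ⟨A, A', B, B', hdg, hset⟩
    have := T.adj_of_diag hdg
    have := mem_of_triple_eq hset
    simp only [Prod.ext_iff] at *
    grind [SimpleGraph.Adj.ne]
  · rintro (rfl | rfl)
    · exact ⟨a, x, b, c, hd, rfl⟩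
    · exact ⟨x, a, c, b, T.diag_symm _ _ hd, by grind⟩

theorem isFace_horizontal_iff {a x : VG} {β : VH} (hax : G.Adj a x) (w : VG × VH) :
    T.IsFace (a, β) (x, β) w ↔
      (∃ γ, T.diag (a, β) (x, γ) ∧ w = (x, γ)) ∨ (∃ γ, T.diag (a, γ) (x, β) ∧ w = (a, γ)) := by
  constructor
  · rintro ⟨A, A', B, B', hdg, hset⟩
    have := T.adj_of_diag hdg
    have := mem_of_triple_eq hset
    simp only [Prod.ext_iff] at *
    have hw : w = (A', B') := by grind [SimpleGraph.Adj.ne]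
    subst hw
    rcases (by grind [SimpleGraph.Adj.ne] : A = a ∧ A' = x ∧ B = β ∨ A = x ∧ A' = a ∧ B = β) with
      ⟨rfl, rfl, rfl⟩ | ⟨rfl, rfl, rfl⟩
    · exact Or.inl ⟨B', hdg, by simp⟩
    · exact Or.inr ⟨B', T.diag_symm _ _ hdg, by simp⟩
  · rintro (⟨γ, hd, rfl⟩ | ⟨γ, hd, rfl⟩)
    · exact ⟨a, x, β, γ, hd, by grind⟩
    · exact ⟨x, a, β, γ, T.diag_symm _ _ hd, by grind⟩

theorem isFaceAvoiding_horizontal_left_iff {a x : VG} {β : VH} (hax : G.Adj a x) (w : VG × VH) :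
    T.IsFaceAvoiding (a, β) (x, β) w (a, β) ↔ ∃ γ, T.diag (a, γ) (x, β) ∧ w = (a, γ) := by
  constructor
  · rintro ⟨A, A', B, B', hdg, hset, hA, hA'⟩
    have := T.adj_of_diag hdg
    have := mem_of_triple_eq hset
    simp only [Prod.ext_iff] at *
    have hw : w = (A', B') := by grind [SimpleGraph.Adj.ne]
    have : A = x ∧ A' = a ∧ B = β := by grind [SimpleGraph.Adj.ne]
    exact ⟨B', by grind [T.diag_symm], by grind⟩
  · rintro ⟨γ, hd, rfl⟩
    have := T.adj_of_diag hd
    exact ⟨x, a, β, γ, T.diag_symm _ _ hd, by grind, by grind [SimpleGraph.Adj.ne]⟩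

theorem isFaceAvoiding_horizontal_right_iff {a x : VG} {β : VH} (hax : G.Adj a x) (w : VG × VH) :
    T.IsFaceAvoiding (a, β) (x, β) w (x, β) ↔ ∃ γ, T.diag (a, β) (x, γ) ∧ w = (x, γ) := by
  constructor
  · rintro ⟨A, A', B, B', hdg, hset, hA, hA'⟩
    have := T.adj_of_diag hdg
    have := mem_of_triple_eq hset
    simp only [Prod.ext_iff] at *
    have hw : w = (A', B') := by grind [SimpleGraph.Adj.ne]
    have : A = a ∧ A' = x ∧ B = β := by grind [SimpleGraph.Adj.ne]
    exact ⟨B', by grind, by grind⟩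
  · rintro ⟨γ, hd, rfl⟩
    have := T.adj_of_diag hd
    exact ⟨a, x, β, γ, hd, by grind, by grind [SimpleGraph.Adj.ne]⟩

variable [Fintype VH]

theorem filter_adj_column {a x : VG} (β : VH) (hax : G.Adj a x) :
    (univ.filter fun c => T.Adj (a, β) (x, c)) =
      insert β (univ.filter fun c => T.diag (a, β) (x, c)) := by
  ext c
  simp only [Adj, mem_filter, mem_univ, true_and, mem_insert]
  grind [SimpleGraph.Adj.ne]

theorem sum_side_sub_sum_side_eq_of_diag (hH : H.IsAcyclic) (D : VG × VH → VG × VH → ℤ)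
    (hsymm : ∀ u v, D u v = D v u) {a x : VG} {b c : VH} (hd : T.diag (a, b) (x, c)) :
    ∑ β with (H.deleteEdges {s(b, c)}).Reachable b β, ∑ γ with T.Adj (a, β) (x, γ), D (a, β) (x, γ)
      - ∑ β with (H.deleteEdges {s(b, c)}).Reachable b β,
          ∑ γ with T.Adj (x, β) (a, γ), D (x, β) (a, γ) = D (a, b) (x, c) := by
  have hax := (T.adj_of_diag hd).1
  have hbc := (T.adj_of_diag hd).2
  let w β γ := if T.Adj (a, β) (x, γ) then D (a, β) (x, γ) else 0
  have hcross β γ (hw : w β γ ≠ 0) (hne : (β, γ) ≠ (b, c)) :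
      (H.deleteEdges {s(b, c)}).Reachable b β ↔ (H.deleteEdges {s(b, c)}).Reachable b γ := by
    have hadj : T.Adj (a, β) (x, γ) := by by_contra h; simp [w, h] at hw
    rcases hadj with ⟨rfl, -⟩ | ⟨h, -⟩ | hdiag
    · rfl
    · exact absurd h hax.ne
    · refine SimpleGraph.reachable_deleteEdges_iff_of_adj (T.adj_of_diag hdiag).2 fun he => ?_
      rcases Sym2.eq_iff.mp he with ⟨rfl, rfl⟩ | ⟨rfl, rfl⟩
      · exact hne rfl
      · exact T.not_diag_and_diag hax ⟨hd, hdiag⟩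
  have hbridge : ¬ (H.deleteEdges {s(b, c)}).Reachable b c :=
    SimpleGraph.isBridge_iff.mp (SimpleGraph.isAcyclic_iff_forall_adj_isBridge.mp hH hbc)
  convert net_flux_eq_of_unique_crossing _ w SimpleGraph.Reachable.rfl hbridge hcross using 2
  · simp only [w, sum_filter]
  · simp only [w, sum_filter, T.adj_comm (u := (x, _)), hsymm (x, _)]
  · simp [w, Adj, hd]

variable [Fintype VG]

theorem alpha_comm (u v z : VG × VH) : T.alpha u v z = T.alpha v u z := by
  simp only [alpha, or_comm (a := z = u), T.diag_comm u v, T.isFaceAvoiding_comm u v]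

theorem div_comm (φ : VG × VH → ℤ) (u v : VG × VH) : T.Div φ u v = T.Div φ v u := by
  simp only [Div, T.isFace_comm u v, T.alpha_comm u v]
  ring

theorem div_sub (φ ψ : VG × VH → ℤ) (u v : VG × VH) :
    T.Div (φ - ψ) u v = T.Div φ u v - T.Div ψ u v := by
  simp only [Div, Pi.sub_apply, sum_sub_distrib]
  ring

theorem div_of_diag (φ : VG × VH → ℤ) {a x : VG} {b c : VH} (hd : T.diag (a, b) (x, c)) :
    T.Div φ (a, b) (x, c) = φ (x, b) + φ (a, c) - φ (a, b) - φ (x, c) := by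
  have hax : a ≠ x := (T.adj_of_diag hd).1.ne
  have hfaces : univ.filter (T.IsFace (a, b) (x, c)) = {(x, b), (a, c)} := by
    ext w
    simp [T.isFace_iff_of_diag hd]
  have hα (z : VG × VH) (hz : z = (a, b) ∨ z = (x, c)) : T.alpha (a, b) (x, c) z = 1 := by
    rw [alpha, if_pos hz, if_pos hd]
  rw [Div, hfaces, sum_pair (by simp [hax.symm]), hα _ (Or.inl rfl), hα _ (Or.inr rfl)]
  ring

theorem alpha_horizontal_left {a x : VG} {β : VH} (hax : G.Adj a x) :
    T.alpha (a, β) (x, β) (a, β) = #{γ | T.diag (a, γ) (x, β)} := by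
  have hnd : ¬ T.diag (a, β) (x, β) := fun h => H.irrefl (T.adj_of_diag h).2
  have hfaces : (univ.filter fun w => T.IsFaceAvoiding (a, β) (x, β) w (a, β)) =
      (univ.filter fun γ => T.diag (a, γ) (x, β)).map (Function.Embedding.sectR a VH) := by
    ext w
    simp [T.isFaceAvoiding_horizontal_left_iff hax, eq_comm]
  rw [alpha, if_pos (Or.inl rfl), if_neg hnd, hfaces, card_map]

theorem alpha_horizontal_right {a x : VG} {β : VH} (hax : G.Adj a x) :
    T.alpha (a, β) (x, β) (x, β) = #{γ | T.diag (a, β) (x, γ)} := by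
  have hnd : ¬ T.diag (a, β) (x, β) := fun h => H.irrefl (T.adj_of_diag h).2
  have hfaces : (univ.filter fun w => T.IsFaceAvoiding (a, β) (x, β) w (x, β)) =
      (univ.filter fun γ => T.diag (a, β) (x, γ)).map (Function.Embedding.sectR x VH) := by
    ext w
    simp [T.isFaceAvoiding_horizontal_right_iff hax, eq_comm]
  rw [alpha, if_pos (Or.inr rfl), if_neg hnd, hfaces, card_map]

theorem div_horizontal (φ : VG × VH → ℤ) {a x : VG} {β : VH} (hax : G.Adj a x) :
    T.Div φ (a, β) (x, β) = ∑ γ with T.diag (a, β) (x, γ), (φ (x, γ) - φ (x, β))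
      + ∑ γ with T.diag (a, γ) (x, β), (φ (a, γ) - φ (a, β)) := by
  have hfaces : (univ.filter fun w => T.IsFace (a, β) (x, β) w) =
      (univ.filter fun γ => T.diag (a, β) (x, γ)).map (Function.Embedding.sectR x VH) ∪
      (univ.filter fun γ => T.diag (a, γ) (x, β)).map (Function.Embedding.sectR a VH) := by
    ext w
    simp [T.isFace_horizontal_iff hax, eq_comm]
  have hdisj : Disjoint
      ((univ.filter fun γ => T.diag (a, β) (x, γ)).map (Function.Embedding.sectR x VH))
      ((univ.filter fun γ => T.diag (a, γ) (x, β)).map (Function.Embedding.sectR a VH)) := by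
    simp [disjoint_left, hax.ne]
  rw [Div, hfaces, sum_union hdisj, sum_map, sum_map, alpha_horizontal_left T hax,
    alpha_horizontal_right T hax]
  simp only [Function.Embedding.sectR_apply, sum_sub_distrib, sum_const, nsmul_eq_mul]
  ring

theorem sum_div_column (φ : VG × VH → ℤ) {a x : VG} (β : VH) (hax : G.Adj a x) :
    ∑ c with T.Adj (a, β) (x, c), T.Div φ (a, β) (x, c) =
      ∑ γ with H.Adj β γ, (φ (a, γ) - φ (a, β)) := by
  have hβ : β ∉ (univ.filter fun c => T.diag (a, β) (x, c)) := by
    simp only [mem_filter, mem_univ, true_and]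
    exact fun h => H.irrefl (T.adj_of_diag h).2
  have hnbrs : (univ.filter fun γ => H.Adj β γ) =
      (univ.filter fun γ => T.diag (a, β) (x, γ)) ∪ univ.filter fun γ => T.diag (a, γ) (x, β) := by
    ext γ
    simp [T.adj_iff_diag_or_diag hax]
  have hdisj : Disjoint (univ.filter fun γ => T.diag (a, β) (x, γ))
      (univ.filter fun γ => T.diag (a, γ) (x, β)) := by
    simp only [disjoint_left, mem_filter, mem_univ, true_and]
    exact fun γ h h' => T.not_diag_and_diag hax ⟨h, h'⟩
  rw [T.filter_adj_column β hax, sum_insert hβ, T.div_horizontal φ hax, hnbrs, sum_union hdisj,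
    sum_congr rfl fun c hc => T.div_of_diag φ (mem_filter.mp hc).2]
  simp only [sum_sub_distrib, sum_add_distrib]
  ring

variable {T}

theorem Cartier.exists_sum_column_eq {D : VG × VH → VG × VH → ℤ} (hD : T.Cartier D) :
    ∃ L : VG × VH → ℤ, ∀ a x β, G.Adj a x →
      ∑ c with T.Adj (a, β) (x, c), D (a, β) (x, c) = L (a, β) := by
  choose Φ hΦ using hD
  refine ⟨fun z => ∑ γ with H.Adj z.2 γ, (Φ z (z.1, γ) - Φ z z), fun a x β hax => ?_⟩
  dsimp only
  rw [← T.sum_div_column (Φ (a, β)) β hax]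
  exact sum_congr rfl fun c hc => hΦ _ _ _ (mem_filter.mp hc).2 (Or.inl rfl)

theorem Cartier.sub_div {D : VG × VH → VG × VH → ℤ} (hD : T.Cartier D) (ψ : VG × VH → ℤ) :
    T.Cartier fun u v => D u v - T.Div ψ u v := fun z => by
  obtain ⟨φ, hφ⟩ := hD z
  exact ⟨φ - ψ, fun u v huv hz => by dsimp only; rw [T.div_sub, hφ u v huv hz]⟩

theorem Cartier.exists_div_eq_on_diag (hH : H.IsTree) {D : VG × VH → VG × VH → ℤ}
    (hsymm : ∀ u v, D u v = D v u) (hD : T.Cartier D) :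
    ∃ ψ : VG × VH → ℤ, ∀ u v, T.diag u v → T.Div ψ u v = D u v := by
  obtain ⟨L, hL⟩ := hD.exists_sum_column_eq
  let τ (b c : VH) (a : VG) : ℤ := ∑ β with (H.deleteEdges {s(b, c)}).Reachable b β, L (a, β)
  have hτ {a x : VG} {b c : VH} (hd : T.diag (a, b) (x, c)) :
      τ b c a - τ b c x = D (a, b) (x, c) := by
    have hax := (T.adj_of_diag hd).1
    rw [← T.sum_side_sub_sum_side_eq_of_diag hH.isAcyclic D hsymm hd]
    simp only [τ, hL _ _ _ hax, hL _ _ _ hax.symm]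
  obtain ⟨g, hg⟩ := hH.exists_potential τ
  refine ⟨fun z => g z.2 z.1, ?_⟩
  rintro ⟨a, b⟩ ⟨x, c⟩ hd
  rw [T.div_of_diag _ hd]
  rcases hg b c (T.adj_of_diag hd).2 with h | h <;>
    have ha := congrFun h a <;> have hx := congrFun h x <;>
    simp only [Pi.sub_apply] at ha hx
  · linarith [hτ hd]
  · linarith [hτ (T.diag_symm _ _ hd), hsymm (a, b) (x, c)]

end TriProd

theorem cartier_equiv_diag_free_general {VG VH : Type*} [Fintype VG] [Fintype VH]
    (G : SimpleGraph VG) (H : SimpleGraph VH)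
    (T : TriProd G H)
    (htree : H.IsTree)
    (D : VG × VH → VG × VH → ℤ) (hsymm : ∀ u v, D u v = D v u)
    (hD : T.Cartier D) :
    ∃ (D' : VG × VH → VG × VH → ℤ) (φ : VG × VH → ℤ),
      (∀ u v, D' u v = D' v u) ∧ T.Cartier D' ∧
      (∀ u v, T.diag u v → D' u v = 0) ∧
      (∀ u v, T.Adj u v → D u v - D' u v = T.Div φ u v) := by
  obtain ⟨ψ, hψ⟩ := hD.exists_div_eq_on_diag htree hsymm
  refine ⟨fun u v => D u v - T.Div ψ u v, ψ, fun u v => ?_, hD.sub_div ψ,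
    fun u v huv => ?_, fun u v _ => sub_sub_cancel _ _⟩
  · simp only [hsymm u v, T.div_comm ψ u v]
  · simp only [hψ u v huv, sub_self]

/-- If `H` is a tree, then every Cartier divisor on the triangulated
product `Δ` of `G` and `H` is linearly equivalent to a Cartier divisor vanishing on
every diagonal edge of `Δ`. -/
theorem cartier_equiv_diag_free {VG VH : Type*} [Fintype VG] [Fintype VH]
    (G : SimpleGraph VG) (H : SimpleGraph VH)
    (hG : G.Connected) (hH : H.Connected)
    (hGe : ∃ a a', G.Adj a a') (hHe : ∃ b b', H.Adj b b')
    (T : TriProd G H)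
    (htree : H.IsTree)
    (D : VG × VH → VG × VH → ℤ) (hsymm : ∀ u v, D u v = D v u)
    (hD : T.Cartier D) :
    ∃ (D' : VG × VH → VG × VH → ℤ) (φ : VG × VH → ℤ),
      (∀ u v, D' u v = D' v u) ∧ T.Cartier D' ∧
      (∀ u v, T.diag u v → D' u v = 0) ∧
      (∀ u v, T.Adj u v → D u v - D' u v = T.Div φ u v) :=
  cartier_equiv_diag_free_general G H T htree D hsymm hD
end

section
/- Let G be a finite connected simple graph with at least one edge, let H = K₂ be the complete graph on two vertices w₁, w₂, and let Δ be a triangulated product of G and H. Let D be a Cartier divisor on Δ, and let v₀, v₁, …, v_{k−1}, v_k = v₀ be a cycle in G (consecutive vertices adjacent, indices taken modulo k). Then Σ_{i=0}^{k−1} D({(v_i,w₂),(v_{i−1},w₁)}) = Σ_{i=0}^{k−1} D({(v_i,w₂),(v_{i+1},w₁)}), where by convention D(p) = 0 whenever p is not an edge of Δ. -/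
open scoped Classical
open Finset

/-!
Choose for each vertex `(c, b)` a function `φ_c` whose divisor agrees with `D` on the edges at
`(c, b)`, and put `A c := φ_c (c, b) - φ_c (c, !b)`. If the square over an edge `a a'` of `G` has
the diagonal `{(a, b), (a', !b)}`, the horizontal edge `{(a, b), (a', b)}` lies in the single
triangle `{(a, b), (a', b), (a', !b)}`. Computing `D` on it both with `φ_a` and with `φ_{a'}`, and
`D` on the diagonal with `φ_a`, gives `D((a, b), (a', !b)) = A a' - A a`. Every edge
`v_i v_{i+1}` of the cycle carries exactly one diagonal, which contributes to exactly one of the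
two sums, so their difference telescopes to `∑ (A v_i - A v_{i+1}) = 0`.
-/

namespace TriProd

section General

variable {VG VH : Type*} {G : SimpleGraph VG} {H : SimpleGraph VH} (T : TriProd G H)

theorem adj_iff_diag {u v : VG × VH} (h₁ : u.1 ≠ v.1) (h₂ : u.2 ≠ v.2) :
    T.Adj u v ↔ T.diag u v := by
  simp [Adj, h₁, h₂]

theorem not_diag_swap {a a' : VG} {b b' : VH} (hd : T.diag (a, b) (a', b')) :
    ¬ T.diag (a, b') (a', b) := by
  obtain ⟨ha, hb⟩ := T.diag_adj _ _ _ _ hd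
  rcases T.diag_choice a a' b b' ha hb with ⟨-, h⟩ | ⟨h, -⟩
  · exact h
  · exact absurd hd h

theorem isFace_iff_exists_isFaceAvoiding (u v w : VG × VH) :
    T.IsFace u v w ↔ ∃ x, T.IsFaceAvoiding u v w x := by
  constructor
  · rintro ⟨p, p', c, c', hd, hs⟩
    obtain ⟨hp, hc⟩ := T.diag_adj _ _ _ _ hd
    exact ⟨(p', c), p, p', c, c', hd, hs, by simp [hp.ne'], by simp [hc.ne]⟩
  · rintro ⟨x, p, p', c, c', hd, hs, -⟩
    exact ⟨p, p', c, c', hd, hs⟩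

theorem isFace_diag_iff {a a' : VG} {b b' : VH} (hd : T.diag (a, b) (a', b')) (w : VG × VH) :
    T.IsFace (a, b) (a', b') w ↔ w = (a', b) ∨ w = (a, b') := by
  obtain ⟨ha, hb⟩ := T.diag_adj _ _ _ _ hd
  have ha' := ha.ne
  have hb' := hb.ne
  constructor
  · rintro ⟨p, p', c, c', hpc, hs⟩
    have hp := (T.diag_adj _ _ _ _ hpc).1.ne
    have hc := (T.diag_adj _ _ _ _ hpc).2.ne
    have h₁ := Finset.ext_iff.mp hs (a, b)
    have h₂ := Finset.ext_iff.mp hs (a', b')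
    have h₃ := Finset.ext_iff.mp hs w
    have h₄ := Finset.ext_iff.mp hs (p', c)
    simp only [Finset.mem_insert, Finset.mem_singleton, Prod.mk.injEq, true_or, or_true,
      iff_true, true_iff] at h₁ h₂ h₃ h₄
    clear hs
    grind
  · rintro (rfl | rfl)
    · exact ⟨a, a', b, b', hd, rfl⟩
    · exact ⟨a', a, b', b, T.diag_symm _ _ hd, by grind⟩

theorem div_diag [Fintype VG] [Fintype VH] {a a' : VG} {b b' : VH}
    (hd : T.diag (a, b) (a', b')) (φ : VG × VH → ℤ) :
    T.Div φ (a, b) (a', b') = φ (a', b) + φ (a, b') - φ (a, b) - φ (a', b') := by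
  have hfaces : univ.filter (T.IsFace (a, b) (a', b')) = {(a', b), (a, b')} := by
    ext w
    simp [T.isFace_diag_iff hd]
  have hne : ((a', b) : VG × VH) ≠ (a, b') := by
    simp [(T.diag_adj _ _ _ _ hd).1.ne']
  simp [Div, alpha, hfaces, sum_pair hne, hd]
  ring

end General

section Bool

variable {VG : Type*} {G : SimpleGraph VG} (T : TriProd G (⊤ : SimpleGraph Bool))

theorem isFaceAvoiding_horizontal_iff {a a' : VG} {b : Bool} (hd : T.diag (a, b) (a', !b))
    (w x : VG × Bool) :
    T.IsFaceAvoiding (a, b) (a', b) w x ↔ w = (a', !b) ∧ x ≠ (a, b) ∧ x ≠ (a', !b) := by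
  have ha := (T.diag_adj _ _ _ _ hd).1.ne
  have hswap := T.not_diag_swap (T.diag_symm _ _ hd)
  constructor
  · rintro ⟨p, p', c, c', hpc, hs, hx, hx'⟩
    have hp := (T.diag_adj _ _ _ _ hpc).1.ne
    obtain rfl : c' = !c := Bool.eq_not_iff.2 (T.diag_adj _ _ _ _ hpc).2.ne.symm
    have h₁ := Finset.ext_iff.mp hs (a, b)
    have h₂ := Finset.ext_iff.mp hs (a', b)
    have h₃ := Finset.ext_iff.mp hs w
    have h₄ := Finset.ext_iff.mp hs (p', c)
    have h₅ := Finset.ext_iff.mp hs (p', !c)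
    simp only [Finset.mem_insert, Finset.mem_singleton, Prod.mk.injEq, true_or, or_true,
      iff_true, true_iff] at h₁ h₂ h₃ h₄ h₅
    clear hs
    grind
  · rintro ⟨rfl, hx, hx'⟩
    exact ⟨a, a', b, !b, hd, by grind, hx, hx'⟩

theorem isFace_horizontal_iff_s16 {a a' : VG} {b : Bool} (hd : T.diag (a, b) (a', !b))
    (w : VG × Bool) :
    T.IsFace (a, b) (a', b) w ↔ w = (a', !b) := by
  have ha := (T.diag_adj _ _ _ _ hd).1.ne
  simp only [isFace_iff_exists_isFaceAvoiding, T.isFaceAvoiding_horizontal_iff hd]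
  exact ⟨fun ⟨_, hw, _⟩ => hw, fun hw => ⟨(a', b), hw, by simp [ha.symm]⟩⟩

variable [Fintype VG]

theorem div_horizontal_s16 {a a' : VG} {b : Bool} (hd : T.diag (a, b) (a', !b))
    (φ : VG × Bool → ℤ) :
    T.Div φ (a, b) (a', b) = φ (a', !b) - φ (a', b) := by
  have ha := (T.diag_adj _ _ _ _ hd).1.ne
  have hnd : ¬ T.diag (a, b) (a', b) := fun h => (T.diag_adj _ _ _ _ h).2.ne rfl
  simp [Div, alpha, hnd, T.isFace_horizontal_iff_s16 hd, T.isFaceAvoiding_horizontal_iff hd, ha,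
    ha.symm, filter_eq']

noncomputable def diagonalValue (D : VG × Bool → VG × Bool → ℤ) (b : Bool) (x y : VG) : ℤ :=
  if T.Adj (x, b) (y, !b) then D (x, b) (y, !b) else 0

variable {T}

theorem Cartier.exists_potential {D : VG × Bool → VG × Bool → ℤ} (hD : T.Cartier D) (b : Bool) :
    ∃ A : VG → ℤ, ∀ a a', T.diag (a, b) (a', !b) → D (a, b) (a', !b) = A a' - A a := by
  choose φ hφ using hD
  refine ⟨fun c => φ (c, b) (c, b) - φ (c, b) (c, !b), fun a a' hd => ?_⟩
  have horiz : T.Adj (a, b) (a', b) := Or.inl ⟨rfl, (T.diag_adj _ _ _ _ hd).1⟩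
  have h₁ := hφ (a, b) _ _ horiz (Or.inl rfl)
  have h₂ := hφ (a', b) _ _ horiz (Or.inr rfl)
  have h₃ := hφ (a, b) _ _ (Or.inr (Or.inr hd)) (Or.inl rfl)
  rw [T.div_horizontal_s16 hd] at h₁ h₂
  rw [T.div_diag hd] at h₃
  linarith

theorem Cartier.exists_potential_diagonalValue {D : VG × Bool → VG × Bool → ℤ}
    (hD : T.Cartier D) (b : Bool) :
    ∃ A : VG → ℤ, ∀ x y, G.Adj x y →
      T.diagonalValue D b y x - T.diagonalValue D b x y = A x - A y := by
  obtain ⟨A, hA⟩ := hD.exists_potential b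
  refine ⟨A, fun x y hxy => ?_⟩
  have hadj {u v : VG} (huv : u ≠ v) : T.Adj (u, b) (v, !b) ↔ T.diag (u, b) (v, !b) :=
    T.adj_iff_diag huv (Bool.not_ne_self b).symm
  rcases T.diag_choice y x b (!b) hxy.symm (by simp) with ⟨hd, hnd⟩ | ⟨hnd, hd⟩
  · have hnd' : ¬ T.diag (x, b) (y, !b) := fun h => hnd (T.diag_symm _ _ h)
    simp only [diagonalValue, if_pos ((hadj hxy.ne').2 hd), if_neg (mt (hadj hxy.ne).1 hnd'),
      hA y x hd, sub_zero]
  · have hd' := T.diag_symm _ _ hd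
    simp only [diagonalValue, if_neg (mt (hadj hxy.ne').1 hnd), if_pos ((hadj hxy.ne).2 hd'),
      hA x y hd']
    ring

end Bool

end TriProd

theorem cycle_diagonal_relation_general {VG : Type*} [Fintype VG]
    (G : SimpleGraph VG)
    (T : TriProd G (⊤ : SimpleGraph Bool))
    (D : VG × Bool → VG × Bool → ℤ)
    (hD : T.Cartier D)
    (k : ℕ) [NeZero k] (v : ZMod k → VG)
    (hcyc : ∀ i : ZMod k, G.Adj (v i) (v (i + 1))) :
    (∑ i : ZMod k,
        if T.Adj (v i, true) (v (i - 1), false) then D (v i, true) (v (i - 1), false)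
        else 0) =
      (∑ i : ZMod k,
        if T.Adj (v i, true) (v (i + 1), false) then D (v i, true) (v (i + 1), false)
        else 0) := by
  obtain ⟨A, hA⟩ := hD.exists_potential_diagonalValue true
  set d := T.diagonalValue D true
  have hshift : ∑ i, d (v i) (v (i - 1)) = ∑ i, d (v (i + 1)) (v i) := by
    rw [← Equiv.sum_comp (Equiv.addRight 1)]
    simp only [Equiv.coe_addRight, add_sub_cancel_right]
  change ∑ i, d (v i) (v (i - 1)) = ∑ i, d (v i) (v (i + 1))
  rw [hshift, ← sub_eq_zero, ← sum_sub_distrib]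
  calc ∑ i, (d (v (i + 1)) (v i) - d (v i) (v (i + 1)))
      = ∑ i, (A (v i) - A (v (i + 1))) := sum_congr rfl fun i _ => hA _ _ (hcyc i)
    _ = 0 := by
      rw [sum_sub_distrib, sub_eq_zero]
      exact (Equiv.sum_comp (Equiv.addRight 1) (A ∘ v)).symm

/-- Let `H = K₂` on the vertices `w₁ = false`, `w₂ = true`, `Δ` a
triangulated product of `G` and `K₂`, `D` a Cartier divisor on `Δ`, and
`v₀, …, v_{k−1}, v_k = v₀` a cycle in `G` (consecutive vertices adjacent, indices mod
`k`).  Then `Σ_i D({(v_i,w₂),(v_{i−1},w₁)}) = Σ_i D({(v_i,w₂),(v_{i+1},w₁)})`, with the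
convention that `D` is `0` on pairs that are not edges of `Δ`. -/
theorem cycle_diagonal_relation {VG : Type*} [Fintype VG]
    (G : SimpleGraph VG)
    (hG : G.Connected) (hGe : ∃ a a', G.Adj a a')
    (T : TriProd G (⊤ : SimpleGraph Bool))
    (D : VG × Bool → VG × Bool → ℤ) (hsymm : ∀ u v, D u v = D v u)
    (hD : T.Cartier D)
    (k : ℕ) [NeZero k] (v : ZMod k → VG)
    (hcyc : ∀ i : ZMod k, G.Adj (v i) (v (i + 1))) :
    (∑ i : ZMod k,
        if T.Adj (v i, true) (v (i - 1), false) then D (v i, true) (v (i - 1), false)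
        else 0) =
      (∑ i : ZMod k,
        if T.Adj (v i, true) (v (i + 1), false) then D (v i, true) (v (i + 1), false)
        else 0) :=
  cycle_diagonal_relation_general G T D hD k v hcyc
end
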